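/- Let K = (K^1,…,K^n) and H = (H^1,…,H^n) be smooth functions on ℝⁿ satisfying ∂_α∂_ρ K^β ∂_γ K^ρ = ∂_α∂_γ H^β for all α,β,γ at every point. Then both K and H satisfy the oriented associativity equations (AE). -/

import Mathlib

noncomputable def pd {n : ℕ} (i : Fin n) (f : (Fin n → ℝ) → ℝ) : (Fin n → ℝ) → ℝ :=
  fun x => fderiv ℝ f x (Pi.single i 1)

lemma pd_contDiff {n : ℕ} (i : Fin n) {f : (Fin n → ℝ) → ℝ} (hf : ContDiff ℝ (⊤ : ℕ∞) f) :
    ContDiff ℝ (⊤ : ℕ∞) (pd i f) :=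
  (hf.fderiv_right (by simp)).clm_apply contDiff_const

lemma pd_comm {n : ℕ} (i j : Fin n) {f : (Fin n → ℝ) → ℝ} (hf : ContDiff ℝ (⊤ : ℕ∞) f)
    (x : Fin n → ℝ) : pd i (pd j f) x = pd j (pd i f) x := by
  have hdf : Differentiable ℝ (fderiv ℝ f) :=
    (hf.fderiv_right (m := (⊤ : ℕ∞)) (by simp)).differentiable (by simp)
  have key : ∀ a b : Fin n, pd a (pd b f) x
      = fderiv ℝ (fderiv ℝ f) x (Pi.single a 1) (Pi.single b 1) := by
    intro a b
    show fderiv ℝ (fun y => fderiv ℝ f y (Pi.single b 1)) x (Pi.single a 1) = _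
    rw [fderiv_clm_apply (hdf x) (differentiableAt_const _)]
    simp
  rw [key, key]
  exact (hf.contDiffAt.isSymmSndFDerivAt (by rw [minSmoothness_of_isRCLikeNormedField]; exact (WithTop.coe_le_coe.mpr le_top : ((2 : ℕ∞) : WithTop ℕ∞) ≤ ((⊤ : ℕ∞) : WithTop ℕ∞)))) _ _

lemma pd_sum_mul {n : ℕ} (e : Fin n) (g h : Fin n → (Fin n → ℝ) → ℝ)
    (hg : ∀ ρ, ContDiff ℝ (⊤ : ℕ∞) (g ρ)) (hh : ∀ ρ, ContDiff ℝ (⊤ : ℕ∞) (h ρ)) (x : Fin n → ℝ) :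
    pd e (fun y => ∑ ρ, g ρ y * h ρ y) x
      = ∑ ρ, (pd e (g ρ) x * h ρ x + g ρ x * pd e (h ρ) x) := by
  have hF : HasFDerivAt (fun y => ∑ ρ, g ρ y * h ρ y)
      (∑ ρ, (g ρ x • fderiv ℝ (h ρ) x + h ρ x • fderiv ℝ (g ρ) x)) x :=
    HasFDerivAt.fun_sum fun ρ _ =>
      (((hg ρ).differentiable (by simp) x).hasFDerivAt).mul
        (((hh ρ).differentiable (by simp) x).hasFDerivAt)
  show fderiv ℝ _ x (Pi.single e 1) = _
  rw [hF.fderiv]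
  simp only [ContinuousLinearMap.sum_apply, ContinuousLinearMap.add_apply,
    ContinuousLinearMap.smul_apply, smul_eq_mul]
  exact Finset.sum_congr rfl fun ρ _ => by unfold pd; ring

/-- conditional Bäcklund transformation: if
`∂_α∂_ρ K^β ∂_γ K^ρ = ∂_α∂_γ H^β`, then both `K` and `H` satisfy the oriented
associativity equations. -/
theorem conditional_backlund_transformation
    {n : ℕ} (hn : 1 ≤ n)
    (K H : Fin n → (Fin n → ℝ) → ℝ)
    (hK : ∀ α, ContDiff ℝ (⊤ : ℕ∞) (K α))
    (hH : ∀ α, ContDiff ℝ (⊤ : ℕ∞) (H α))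
    (hBT : ∀ α β γ, ∀ x : Fin n → ℝ,
      ∑ ρ, pd α (pd ρ (K β)) x * pd γ (K ρ) x = pd α (pd γ (H β)) x) :
    (∀ α β γ ν, ∀ x : Fin n → ℝ,
      ∑ ρ, pd α (pd ρ (K ν)) x * pd β (pd γ (K ρ)) x
        = ∑ ρ, pd α (pd β (K ρ)) x * pd ρ (pd γ (K ν)) x) ∧
    (∀ α β γ ν, ∀ x : Fin n → ℝ,
      ∑ ρ, pd α (pd ρ (H ν)) x * pd β (pd γ (H ρ)) x
        = ∑ ρ, pd α (pd β (H ρ)) x * pd ρ (pd γ (H ν)) x) := by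
  -- second-derivative symmetry
  have sK : ∀ (a : Fin n) i j x, pd i (pd j (K a)) x = pd j (pd i (K a)) x :=
    fun a i j x => pd_comm i j (hK a) x
  have sH : ∀ (a : Fin n) i j x, pd i (pd j (H a)) x = pd j (pd i (H a)) x :=
    fun a i j x => pd_comm i j (hH a) x
  have sK3 : ∀ (a : Fin n) i j k x,
      pd i (pd j (pd k (K a))) x = pd j (pd i (pd k (K a))) x :=
    fun a i j k x => pd_comm i j (pd_contDiff k (hK a)) x
  have sH3 : ∀ (a : Fin n) i j k x,
      pd i (pd j (pd k (H a))) x = pd j (pd i (pd k (H a))) x :=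
    fun a i j k x => pd_comm i j (pd_contDiff k (hH a)) x
  -- differentiated Bäcklund relation
  have hD : ∀ (e a b c : Fin n) (x : Fin n → ℝ),
      ∑ ρ, (pd e (pd a (pd ρ (K b))) x * pd c (K ρ) x
          + pd a (pd ρ (K b)) x * pd e (pd c (K ρ)) x)
        = pd e (pd a (pd c (H b))) x := by
    intro e a b c x
    have hfun : (fun y => ∑ ρ, pd a (pd ρ (K b)) y * pd c (K ρ) y)
        = pd a (pd c (H b)) := funext (hBT a b c)
    rw [← hfun,
      pd_sum_mul e _ _ (fun ρ => pd_contDiff a (pd_contDiff ρ (hK b)))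
        (fun ρ => pd_contDiff c (hK ρ)) x]
  -- EQ2 : key symmetry from differentiating hBT
  have EQ2 : ∀ (α δ γ β : Fin n) (x : Fin n → ℝ),
      ∑ ρ, pd α (pd ρ (K β)) x * pd δ (pd γ (K ρ)) x
        = ∑ ρ, pd δ (pd ρ (K β)) x * pd α (pd γ (K ρ)) x := by
    intro α δ γ β x
    have h1 := hD δ α β γ x
    have h2 := hD α δ β γ x
    rw [Finset.sum_add_distrib] at h1 h2
    have h3 : (∑ ρ, pd δ (pd α (pd ρ (K β))) x * pd γ (K ρ) x)
        = ∑ ρ, pd α (pd δ (pd ρ (K β))) x * pd γ (K ρ) x :=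
      Finset.sum_congr rfl fun ρ _ => by rw [sK3 β δ α ρ x]
    have h4 : pd δ (pd α (pd γ (H β))) x = pd α (pd δ (pd γ (H β))) x :=
      sH3 β δ α γ x
    linarith
  -- associativity equations for K
  have AEK : ∀ (α β γ ν : Fin n) (x : Fin n → ℝ),
      ∑ ρ, pd α (pd ρ (K ν)) x * pd β (pd γ (K ρ)) x
        = ∑ ρ, pd α (pd β (K ρ)) x * pd ρ (pd γ (K ν)) x := by
    intro α β γ ν x
    calc ∑ ρ, pd α (pd ρ (K ν)) x * pd β (pd γ (K ρ)) x
        = ∑ ρ, pd α (pd ρ (K ν)) x * pd γ (pd β (K ρ)) x :=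
          Finset.sum_congr rfl fun ρ _ => by rw [sK ρ β γ x]
      _ = ∑ ρ, pd γ (pd ρ (K ν)) x * pd α (pd β (K ρ)) x := EQ2 α γ β ν x
      _ = ∑ ρ, pd α (pd β (K ρ)) x * pd ρ (pd γ (K ν)) x :=
          Finset.sum_congr rfl fun ρ _ => by rw [sK ν γ ρ x]; ring
  refine ⟨AEK, ?_⟩
  -- associativity equations for H
  intro α β γ ν x
  -- key lemma
  have keyB : ∀ (a b t v : Fin n),
      ∑ ρ, pd a (pd ρ (H v)) x * pd b (pd t (K ρ)) x
        = ∑ ρ, pd ρ (pd t (K v)) x * pd b (pd a (H ρ)) x := by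
    intro a b t v
    calc ∑ ρ, pd a (pd ρ (H v)) x * pd b (pd t (K ρ)) x
        = ∑ ρ, (∑ σ, pd ρ (pd σ (K v)) x * pd a (K σ) x) * pd b (pd t (K ρ)) x := by
          refine Finset.sum_congr rfl fun ρ _ => ?_
          rw [sH v a ρ x, ← hBT ρ v a x]
      _ = ∑ σ, pd a (K σ) x * ∑ ρ, pd σ (pd ρ (K v)) x * pd b (pd t (K ρ)) x := by
          simp only [Finset.sum_mul, Finset.mul_sum]
          rw [Finset.sum_comm]
          exact Finset.sum_congr rfl fun σ _ => Finset.sum_congr rfl fun ρ _ => by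
            rw [sK v ρ σ x]; ring
      _ = ∑ σ, pd a (K σ) x * ∑ ρ, pd σ (pd b (K ρ)) x * pd ρ (pd t (K v)) x := by
          refine Finset.sum_congr rfl fun σ _ => ?_
          rw [AEK σ b t v x]
      _ = ∑ ρ, pd ρ (pd t (K v)) x * ∑ σ, pd b (pd σ (K ρ)) x * pd a (K σ) x := by
          simp only [Finset.mul_sum]
          rw [Finset.sum_comm]
          exact Finset.sum_congr rfl fun ρ _ => Finset.sum_congr rfl fun σ _ => by
            rw [sK ρ σ b x]; ring
      _ = ∑ ρ, pd ρ (pd t (K v)) x * pd b (pd a (H ρ)) x := by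
          refine Finset.sum_congr rfl fun ρ _ => ?_
          rw [hBT b ρ a x]
  calc ∑ ρ, pd α (pd ρ (H ν)) x * pd β (pd γ (H ρ)) x
      = ∑ ρ, pd α (pd ρ (H ν)) x * ∑ τ, pd β (pd τ (K ρ)) x * pd γ (K τ) x := by
        refine Finset.sum_congr rfl fun ρ _ => ?_
        rw [hBT β ρ γ x]
    _ = ∑ τ, (∑ ρ, pd α (pd ρ (H ν)) x * pd β (pd τ (K ρ)) x) * pd γ (K τ) x := by
        simp only [Finset.mul_sum, Finset.sum_mul]
        rw [Finset.sum_comm]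
        exact Finset.sum_congr rfl fun τ _ => Finset.sum_congr rfl fun ρ _ => by ring
    _ = ∑ τ, (∑ ρ, pd ρ (pd τ (K ν)) x * pd β (pd α (H ρ)) x) * pd γ (K τ) x := by
        refine Finset.sum_congr rfl fun τ _ => ?_
        rw [keyB α β τ ν]
    _ = ∑ ρ, pd α (pd β (H ρ)) x * ∑ τ, pd ρ (pd τ (K ν)) x * pd γ (K τ) x := by
        simp only [Finset.mul_sum, Finset.sum_mul]
        rw [Finset.sum_comm]
        exact Finset.sum_congr rfl fun ρ _ => Finset.sum_congr rfl fun τ _ => by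
          rw [sH ρ β α x]; ring
    _ = ∑ ρ, pd α (pd β (H ρ)) x * pd ρ (pd γ (H ν)) x := by
        refine Finset.sum_congr rfl fun ρ _ => ?_
        rw [hBT ρ ν γ x]
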